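/- arXiv:2603.05635 — 2 statements merged into one kernel-verified Lean document; each statement's English description precedes it below -/
import Mathlib

section
/- Let k be a commutative unital ring, let m ≥ 1, and let A be a k-algebra such that [x₁,x₂]^m is a polynomial identity of A. Then for any nilpotent elements a, b ∈ A, the sum a + b is nilpotent. -/
/-- `p` is a polynomial identity of the `k`-algebra `A`: every `k`-algebra
homomorphism from the free associative algebra on countably many variables to
`A` (equivalently, every substitution of elements of `A` for the variables)
sends `p` to `0`. -/
def IsPolyId (k A : Type*) [CommRing k] [Semiring A] [Algebra k A]
    (p : FreeAlgebra k ℕ) : Prop :=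
  ∀ f : ℕ → A, FreeAlgebra.lift k f p = 0

/-- `[x₁,x₂]^m`, the `m`-th power of the commutator of the first two variables
of the free algebra. -/
noncomputable def commPow (k : Type*) [CommRing k] (m : ℕ) : FreeAlgebra k ℕ :=
  (FreeAlgebra.ι k 0 * FreeAlgebra.ι k 1 - FreeAlgebra.ι k 1 * FreeAlgebra.ι k 0) ^ m

/-- `[x₁,x₂][x₃,x₄]⋯[x₂ₘ₋₁,x₂ₘ]`, the product of `m` commutators in `2m`
distinct variables of the free algebra. -/
noncomputable def commProd (k : Type*) [CommRing k] (m : ℕ) : FreeAlgebra k ℕ :=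
  ((List.range m).map (fun i =>
    FreeAlgebra.ι k (2 * i) * FreeAlgebra.ι k (2 * i + 1)
      - FreeAlgebra.ι k (2 * i + 1) * FreeAlgebra.ι k (2 * i))).prod

/-- The standard polynomial `st_d(x₁,…,x_d) = Σ_{σ ∈ S_d} sgn(σ) x_{σ(1)}⋯x_{σ(d)}`
in the free algebra. -/
noncomputable def stPoly (k : Type*) [CommRing k] (d : ℕ) : FreeAlgebra k ℕ :=
  ∑ σ : Equiv.Perm (Fin d),
    (Equiv.Perm.sign σ : ℤ) •
      ((List.finRange d).map (fun i => FreeAlgebra.ι k ((σ i : Fin d) : ℕ))).prod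

/-- `A` satisfies a proper (monic multilinear) polynomial identity: for some
`n ≥ 1` there are coefficients `c σ ∈ k` for the non-identity permutations `σ`
of `{1,…,n}` such that `x₁⋯x_n + Σ_{σ ≠ id} c_σ x_{σ(1)}⋯x_{σ(n)}` is a
polynomial identity of `A`. -/
def SatisfiesProperId (k A : Type*) [CommRing k] [Semiring A] [Algebra k A] : Prop :=
  ∃ n : ℕ, 1 ≤ n ∧ ∃ c : Equiv.Perm (Fin n) → k,
    IsPolyId k A
      (((List.finRange n).map (fun i => FreeAlgebra.ι k (i : ℕ))).prod
        + ∑ σ ∈ Finset.univ.erase (1 : Equiv.Perm (Fin n)),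
            c σ • ((List.finRange n).map (fun i => FreeAlgebra.ι k ((σ i : Fin n) : ℕ))).prod)

/-- `a` is strongly nilpotent: every sequence `s` with `s 0 = a` and
`s (n+1) ∈ s n • A • s n` is eventually zero. -/
def IsStronglyNilpotent {A : Type*} [Ring A] (a : A) : Prop :=
  ∀ s : ℕ → A, s 0 = a → (∀ n, ∃ x : A, s (n + 1) = s n * x * s n) →
    ∃ N, ∀ n ≥ N, s n = 0

/-!
A nilpotent element lies in every prime two-sided ideal `P` of `A`: the quotient `A ⧸ P` is a
prime ring satisfying `[x, y]ᵐ = 0`, and such a ring is reduced. Indeed, if `d² = 0` then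
`(d w)ᵐ d = [d, w]ᵐ d = 0` for all `w`, and in a prime ring a bound `(d w)ⁿ d = 0` for all `w`
can be lowered step by step down to `d = 0`. On the other hand, an element that is not
nilpotent avoids some prime ideal (Zorn). So `a + b` lies in every prime ideal, and is therefore nilpotent.
-/

section Ring

variable {R : Type*} [Ring R]

theorem IsNilpotent.mul_comm {a b : R} (h : IsNilpotent (a * b)) : IsNilpotent (b * a) := by
  obtain ⟨n, hn⟩ := h
  refine ⟨n + 1, ?_⟩
  rw [_root_.pow_succ, ← mul_assoc, mul_pow_mul, hn, mul_zero, zero_mul]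

theorem exists_add_pow_eq_pow_add_mul {y v : R} (h : y * v = 0) (n : ℕ) :
    ∃ t, (y + v) ^ n = y ^ n + v * t := by
  induction n with
  | zero => exact ⟨0, by simp⟩
  | succ n ih =>
    obtain ⟨t, ht⟩ := ih
    refine ⟨(y + v) ^ n, ?_⟩
    rw [pow_succ', pow_succ', add_mul, ht, mul_add y, ← mul_assoc, h, zero_mul, add_zero]

theorem commutator_pow_mul_eq_pow_mul {d : R} (hd : d * d = 0) (w : R) (j : ℕ) :
    (d * w - w * d) ^ j * d = (d * w) ^ j * d := by
  induction j with
  | zero => simp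
  | succ j ih =>
    calc (d * w - w * d) ^ (j + 1) * d = (d * w - w * d) ^ j * d * (w * d) := by
          rw [_root_.pow_succ, mul_assoc, sub_mul, mul_assoc w, hd, mul_zero, sub_zero]
          simp only [mul_assoc]
      _ = (d * w) ^ (j + 1) * d := by rw [ih, _root_.pow_succ]; simp only [mul_assoc]

/-- Apply the hypothesis to the perturbation `x + (x d)ⁿ z` of `x`: it yields
`u z u (1 + z t d) = 0` for `u = (d x)ⁿ d` and some `t`, and `1 + z t d` is a unit. -/
theorem pow_mul_mul_mul_pow_mul_eq_zero {d : R} {n : ℕ} (H : ∀ w, (d * w) ^ (n + 1) * d = 0)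
    (x z : R) : (d * x) ^ n * d * z * ((d * x) ^ n * d) = 0 := by
  set y := d * x
  set u := y ^ n * d with hu
  have hyu : y * u = 0 := by rw [hu, ← mul_assoc, ← pow_succ', H]
  have hyv : y * (u * z) = 0 := by rw [← mul_assoc, hyu, zero_mul]
  obtain ⟨t, ht⟩ := exists_add_pow_eq_pow_add_mul hyv n
  have hunit : IsUnit (1 + z * t * d) := by
    refine IsNilpotent.isUnit_one_add (IsNilpotent.mul_comm ⟨n + 2, ?_⟩)
    rw [_root_.pow_succ, ← mul_assoc, H, zero_mul]
  have hperturb : y + u * z = d * (x + (x * d) ^ n * z) := by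
    rw [mul_add, ← mul_assoc d, ← mul_pow_mul]
  clear_value y u
  have key : (y + u * z) ^ (n + 1) * d = u * z * u * (1 + z * t * d) := by
    calc (y + u * z) ^ (n + 1) * d = (y + u * z) * (u + u * z * (t * d)) := by
          rw [pow_succ', mul_assoc, ht, add_mul (y ^ n), ← hu, mul_assoc (u * z)]
      _ = y * u + y * (u * z) * (t * d) + u * z * (u + u * z * (t * d)) := by noncomm_ring
      _ = u * z * u * (1 + z * t * d) := by rw [hyu, hyv]; noncomm_ring
  rw [hperturb, H] at key
  exact hunit.mul_left_eq_zero.1 key.symm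

end Ring

/-- Unlike the usual convention, the zero ring is not excluded. -/
def IsPrimeRing (R : Type*) [Ring R] : Prop :=
  ∀ u v : R, (∀ r, u * r * v = 0) → u = 0 ∨ v = 0

namespace IsPrimeRing

variable {R : Type*} [Ring R]

theorem eq_zero_of_forall_pow_mul_eq_zero (hR : IsPrimeRing R) {d : R} {n : ℕ}
    (H : ∀ w, (d * w) ^ n * d = 0) : d = 0 := by
  induction n with
  | zero => simpa using H 0
  | succ n ih =>
    exact ih fun w => (hR _ _ (pow_mul_mul_mul_pow_mul_eq_zero H w)).elim id id

theorem isReduced_of_commutator_pow_eq_zero (hR : IsPrimeRing R) {m : ℕ}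
    (hid : ∀ x y : R, (x * y - y * x) ^ m = 0) : IsReduced R := by
  refine (isReduced_iff_pow_one_lt 2 one_lt_two).2 fun d hd => ?_
  rw [sq] at hd
  refine hR.eq_zero_of_forall_pow_mul_eq_zero (n := m) fun w => ?_
  rw [← commutator_pow_mul_eq_pow_mul hd, hid, zero_mul]

end IsPrimeRing

namespace TwoSidedIdeal

variable {R : Type*} [Ring R]

/-- `⊤` is not excluded. -/
def IsPrime (P : TwoSidedIdeal R) : Prop :=
  ∀ u v : R, (∀ r, u * r * v ∈ P) → u ∈ P ∨ v ∈ P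

theorem mk'_eq_zero_iff (P : TwoSidedIdeal R) {x : R} : P.ringCon.mk' x = 0 ↔ x ∈ P := by
  rw [← mem_ker, ker_ringCon_mk']

theorem IsPrime.isPrimeRing_quotient {P : TwoSidedIdeal R} (hP : P.IsPrime) :
    IsPrimeRing P.ringCon.Quotient := by
  intro U V hUV
  obtain ⟨u, rfl⟩ := P.ringCon.mk'_surjective U
  obtain ⟨v, rfl⟩ := P.ringCon.mk'_surjective V
  simp only [P.mk'_eq_zero_iff]
  refine hP u v fun r => ?_
  rw [← P.mk'_eq_zero_iff, map_mul, map_mul]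
  exact hUV _

theorem IsPrime.mem_of_isNilpotent {P : TwoSidedIdeal R} (hP : P.IsPrime) {m : ℕ}
    (hid : ∀ x y : R, (x * y - y * x) ^ m = 0) {a : R} (ha : IsNilpotent a) : a ∈ P := by
  have hidQ : ∀ X Y : P.ringCon.Quotient, (X * Y - Y * X) ^ m = 0 := by
    intro X Y
    obtain ⟨x, rfl⟩ := P.ringCon.mk'_surjective X
    obtain ⟨y, rfl⟩ := P.ringCon.mk'_surjective Y
    rw [← map_mul, ← map_mul, ← map_sub, ← map_pow, hid, map_zero]
  have hred := hP.isPrimeRing_quotient.isReduced_of_commutator_pow_eq_zero hidQ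
  exact P.mk'_eq_zero_iff.1 (hred.eq_zero _ (ha.map P.ringCon.mk'))

theorem mem_sSup_of_isChain {C : Set (TwoSidedIdeal R)} (hC : IsChain (· ≤ ·) C)
    (hne : C.Nonempty) {x : R} : x ∈ sSup C ↔ ∃ I ∈ C, x ∈ I := by
  refine ⟨fun hx => ?_, fun ⟨I, hI, hxI⟩ => le_sSup hI hxI⟩
  let U : TwoSidedIdeal R := mk' {x | ∃ I ∈ C, x ∈ I}
    (hne.elim fun I hI => ⟨I, hI, I.zero_mem⟩)
    (fun ⟨I, hI, hx⟩ ⟨J, hJ, hy⟩ => by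
      rcases hC.total hI hJ with h | h
      · exact ⟨J, hJ, J.add_mem (h hx) hy⟩
      · exact ⟨I, hI, I.add_mem hx (h hy)⟩)
    (fun ⟨I, hI, hx⟩ => ⟨I, hI, I.neg_mem hx⟩)
    (fun ⟨I, hI, hy⟩ => ⟨I, hI, I.mul_mem_left _ _ hy⟩)
    (fun ⟨I, hI, hx⟩ => ⟨I, hI, I.mul_mem_right _ _ hx⟩)
  have hCU : sSup C ≤ U := sSup_le fun I hI y hy => (mem_mk' ..).2 ⟨I, hI, hy⟩
  exact (mem_mk' _ _ _ _ _ _ x).1 (hCU hx)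

def leftColon (P : TwoSidedIdeal R) (v : R) : TwoSidedIdeal R :=
  mk' {x | ∀ r, x * r * v ∈ P}
    (fun r => by simp)
    (fun hx hy r => by simpa [add_mul] using P.add_mem (hx r) (hy r))
    (fun hx r => by simpa using P.neg_mem (hx r))
    (fun {s _} hx r => by simpa [mul_assoc] using P.mul_mem_left s _ (hx r))
    (fun {_ s} hx r => by simpa [mul_assoc] using hx (s * r))

def rightColon (P : TwoSidedIdeal R) (w : R) : TwoSidedIdeal R :=
  mk' {y | ∀ r, w * r * y ∈ P}
    (fun r => by simp)
    (fun hx hy r => by simpa [mul_add] using P.add_mem (hx r) (hy r))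
    (fun hx r => by simpa using P.neg_mem (hx r))
    (fun {s _} hy r => by simpa [mul_assoc] using hy (r * s))
    (fun {_ s} hy r => by simpa [mul_assoc] using P.mul_mem_right _ s (hy r))

@[simp]
theorem mem_leftColon {P : TwoSidedIdeal R} {v x : R} : x ∈ P.leftColon v ↔ ∀ r, x * r * v ∈ P :=
  mem_mk' ..

@[simp]
theorem mem_rightColon {P : TwoSidedIdeal R} {w y : R} :
    y ∈ P.rightColon w ↔ ∀ r, w * r * y ∈ P :=
  mem_mk' ..

theorem le_leftColon (P : TwoSidedIdeal R) (v : R) : P ≤ P.leftColon v :=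
  fun x hx => mem_leftColon.2 fun r => P.mul_mem_right _ v (P.mul_mem_right x r hx)

theorem le_rightColon (P : TwoSidedIdeal R) (w : R) : P ≤ P.rightColon w :=
  fun y hy => mem_rightColon.2 fun r => P.mul_mem_left (w * r) y hy

/-- A two-sided ideal maximal among those avoiding the powers of `c` is prime. -/
theorem exists_isPrime_notMem_of_not_isNilpotent {c : R} (hc : ¬IsNilpotent c) :
    ∃ P : TwoSidedIdeal R, P.IsPrime ∧ c ∉ P := by
  let S : Set (TwoSidedIdeal R) := {I | ∀ n, c ^ n ∉ I}
  have hbot : ⊥ ∈ S := fun n hn => hc ⟨n, (mem_bot _).1 hn⟩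
  obtain ⟨P, -, hPS, hPmax⟩ := zorn_le_nonempty₀ S (fun C hCS hC I hI =>
    ⟨sSup C, fun n hn => by
      obtain ⟨J, hJ, hnJ⟩ := (mem_sSup_of_isChain hC ⟨I, hI⟩).1 hn
      exact hCS hJ n hnJ, fun _ => le_sSup⟩) ⊥ hbot
  have escape : ∀ J : TwoSidedIdeal R, P ≤ J → ∀ x ∈ J, x ∉ P → ∃ n, c ^ n ∈ J := by
    intro J hPJ x hxJ hxP
    by_contra! hJ
    exact hxP (hPmax hJ hPJ hxJ)
  refine ⟨P, fun u v huv => ?_, fun h => hPS 1 (by rwa [pow_one])⟩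
  by_contra! ⟨hu, hv⟩
  obtain ⟨i, hi⟩ := escape _ (P.le_leftColon v) u (mem_leftColon.2 huv) hu
  obtain ⟨j, hj⟩ := escape _ (P.le_rightColon (c ^ i)) v (mem_rightColon.2 (mem_leftColon.1 hi)) hv
  exact hPS (i + j) (by simpa [pow_add] using mem_rightColon.1 hj 1)

end TwoSidedIdeal

theorem IsPolyId.commutator_pow_eq_zero {k A : Type*} [CommRing k] [Ring A] [Algebra k A]
    {m : ℕ} (h : IsPolyId k A (commPow k m)) (x y : A) : (x * y - y * x) ^ m = 0 := by
  simpa [commPow] using h fun i => if i = 0 then x else y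

theorem nilpotent_add_nilpotent_general
    (k A : Type*) [CommRing k] [Ring A] [Algebra k A]
    (m : ℕ) (hid : IsPolyId k A (commPow k m))
    (a b : A) (ha : IsNilpotent a) (hb : IsNilpotent b) :
    IsNilpotent (a + b) := by
  by_contra h
  obtain ⟨P, hP, hab⟩ := TwoSidedIdeal.exists_isPrime_notMem_of_not_isNilpotent h
  have hidA := hid.commutator_pow_eq_zero
  exact hab (P.add_mem (hP.mem_of_isNilpotent hidA ha) (hP.mem_of_isNilpotent hidA hb))

theorem nilpotent_add_nilpotent
    (k A : Type*) [CommRing k] [Ring A] [Algebra k A]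
    (m : ℕ) (hm : 1 ≤ m) (hid : IsPolyId k A (commPow k m))
    (a b : A) (ha : IsNilpotent a) (hb : IsNilpotent b) :
    IsNilpotent (a + b) :=
  nilpotent_add_nilpotent_general k A m hid a b ha hb
end

section
/- Let k be a commutative unital ring and let A be a k-algebra such that [x₁,x₂]^m is a polynomial identity of A for some m ≥ 1. Then the set of nilpotent elements of A is a two-sided ideal of A (it is closed under addition, under multiplication by scalars from k, and under left and right multiplication by arbitrary elements of A). -/
/-!
If `[x, y]^m = 0` holds in `R` and `b² = 0`, then `b (y b)^m = b [y, b]^m = 0` for every `y`,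
so the right ideal `b R` is nil of bounded index; by Levitzki's lemma it vanishes when `R` is
semiprime. Hence every semiprime quotient of `R` is reduced, i.e. nilpotent elements lie in every
semiprime two-sided ideal. Conversely, an ideal maximal among those missing all powers of a
non-nilpotent `c` is semiprime, so the nilpotent elements are exactly the intersection of the
semiprime ideals. Levitzki's lemma is proved by induction on the index: the multilinearisation
`∑_σ c z_{σ 1} c ⋯ c z_{σ n} c` of `c (y c)^n` (obtained by inclusion–exclusion, without dividing
by `n!`) also vanishes, and substituting `z = (X, w₁ c X, …, wₙ₋₁ c X)` passes to `c X c`.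
-/

section Polarization
open Finset

theorem Finset.eq_zero_of_forall_sum_powerset_eq_zero {α M : Type*} [DecidableEq α]
    [AddCommGroup M] {g : Finset α → M} (h : ∀ T : Finset α, ∑ T' ∈ T.powerset, g T' = 0)
    (T : Finset α) : g T = 0 := by
  induction T using Finset.strongInduction with
  | H T ih =>
    have hT := h T
    rwa [← add_sum_erase _ _ (mem_powerset_self T), sum_eq_zero, add_zero] at hT
    intro T' hT'
    rw [mem_erase, mem_powerset] at hT'
    exact ih T' (hT'.2.ssubset_of_ne hT'.1)

theorem MultilinearMap.sum_perm_eq_zero_of_forall_const_eq_zero {ι S M N : Type*} [Fintype ι]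
    [DecidableEq ι] [CommSemiring S] [AddCommMonoid M] [Module S M] [AddCommGroup N]
    [Module S N] (f : MultilinearMap S (fun _ : ι => M) N) (hf : ∀ x, f (fun _ => x) = 0)
    (z : ι → M) : ∑ σ : Equiv.Perm ι, f (fun i => z (σ i)) = 0 := by
  -- Möbius inversion on the image of `r` in `∑ r, f (z ∘ r) = f (fun _ => ∑ j, z j)`
  set g : Finset ι → N := fun T => ∑ r ∈ univ.filter (fun r : ι → ι => univ.image r = T),
    f (fun i => z (r i)) with hg
  have hg_powerset (T : Finset ι) : ∑ T' ∈ T.powerset, g T' = 0 := by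
    have hmaps : ∀ r ∈ Fintype.piFinset fun _ : ι => T, univ.image r ∈ T.powerset := by
      intro r hr
      simpa [Finset.subset_iff] using hr
    rw [← hf (∑ j ∈ T, z j), f.map_sum_finset (fun _ j => z j) (fun _ => T),
      ← sum_fiberwise_of_maps_to hmaps]
    refine sum_congr rfl fun T' hT' => sum_congr ?_ fun _ _ => rfl
    ext r
    simp only [mem_filter, mem_univ, true_and, Fintype.mem_piFinset, iff_and_self]
    rintro rfl i
    exact mem_powerset.1 hT' (mem_image_of_mem r (mem_univ i))
  have hsurj : univ.filter (fun r : ι → ι => univ.image r = univ) =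
      univ.map ⟨fun σ : Equiv.Perm ι => ⇑σ, DFunLike.coe_injective⟩ := by
    ext r
    simp only [mem_filter, mem_univ, true_and, mem_map, Function.Embedding.coeFn_mk]
    constructor
    · intro h
      have hr : Function.Surjective r := fun y => by
        obtain ⟨x, -, hx⟩ := mem_image.1 (h ▸ mem_univ y)
        exact ⟨x, hx⟩
      exact ⟨Equiv.ofBijective r (Finite.surjective_iff_bijective.1 hr), rfl⟩
    · rintro ⟨σ, rfl⟩
      exact image_univ_of_surjective σ.surjective
  simpa only [hg, hsurj, sum_map, Function.Embedding.coeFn_mk] using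
    eq_zero_of_forall_sum_powerset_eq_zero hg_powerset univ

end Polarization

theorem List.prod_ofFn_eq_zero_of_mul_eq_zero {M : Type*} [MonoidWithZero M] :
    ∀ {n : ℕ} (f : Fin (n + 1) → M) (k : Fin n), f k.castSucc * f k.succ = 0 →
      (List.ofFn f).prod = 0
  | 0, _, k, _ => k.elim0
  | n + 1, f, k, h => by
    rw [List.ofFn_succ, List.prod_cons]
    cases k using Fin.cases with
    | zero => rw [List.ofFn_succ, List.prod_cons, ← mul_assoc]; simp_all
    | succ k => rw [List.prod_ofFn_eq_zero_of_mul_eq_zero _ k h, mul_zero]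

section Sandwich

variable {R : Type*} [Ring R]

/-- The multilinear map `(z₁, …, zₙ) ↦ c z₁ c z₂ c ⋯ c zₙ c`. -/
def sandwich (c : R) (n : ℕ) : MultilinearMap ℤ (fun _ : Fin n => R) R :=
  (LinearMap.mulLeft ℤ c).compMultilinearMap
    ((MultilinearMap.mkPiAlgebraFin ℤ n R).compLinearMap fun _ => LinearMap.mulRight ℤ c)

theorem sandwich_apply (c : R) {n : ℕ} (z : Fin n → R) :
    sandwich c n z = c * (List.ofFn fun i => z i * c).prod :=
  rfl

theorem sandwich_const (c y : R) (n : ℕ) : sandwich c n (fun _ => y) = c * (y * c) ^ n := by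
  rw [sandwich_apply, List.ofFn_const, List.prod_replicate]

theorem sandwich_cons_mul_mul (c X : R) {n : ℕ} (w : Fin n → R) :
    sandwich c (n + 1) (Fin.cons X fun i => w i * c * X) = sandwich (c * X * c) n w := by
  simp only [sandwich_apply, List.ofFn_succ, Fin.cons_zero, Fin.cons_succ, List.prod_cons,
    mul_assoc]

open Equiv

theorem sandwich_cons_perm_eq_zero {c X : R} (hX : c * X * c * X * c = 0) {n : ℕ}
    (w : Fin n → R) {σ : Perm (Fin (n + 1))} (hσ : σ 0 ≠ 0) :
    sandwich c (n + 1) (fun k => (Fin.cons X fun i => w i * c * X : Fin (n + 1) → R) (σ k)) =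
      0 := by
  -- the slot right before `X` holds some `w i * c * X`, producing the factor `c X c X c`
  obtain ⟨k, hk⟩ : ∃ k : Fin n, σ k.succ = 0 := by
    obtain ⟨k, hk⟩ := (Fin.exists_succ_eq (x := σ.symm 0)).2 fun h =>
      hσ (by simpa [h] using σ.apply_symm_apply 0)
    exact ⟨k, by rw [hk, σ.apply_symm_apply]⟩
  obtain ⟨i, hi⟩ : ∃ i : Fin n, i.succ = σ k.castSucc :=
    Fin.exists_succ_eq.2 fun h =>
      (Fin.castSucc_lt_succ (i := k)).ne (σ.injective (h.trans hk.symm))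
  rw [sandwich_apply, List.prod_ofFn_eq_zero_of_mul_eq_zero _ k, mul_zero]
  simp only [← hi, hk, Fin.cons_succ, Fin.cons_zero]
  simp only [mul_assoc] at hX ⊢
  rw [hX, mul_zero]

theorem sum_sandwich_cons_perm {c X : R} (hX : c * X * c * X * c = 0) {n : ℕ}
    (w : Fin n → R) :
    ∑ σ : Perm (Fin (n + 1)),
        sandwich c (n + 1) (fun k => (Fin.cons X fun i => w i * c * X : Fin (n + 1) → R) (σ k)) =
      ∑ τ : Perm (Fin n), sandwich (c * X * c) n (fun k => w (τ k)) := by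
  rw [← Equiv.sum_comp Perm.decomposeFin.symm, Fintype.sum_prod_type, Fin.sum_univ_succ,
    Finset.sum_eq_zero (s := Finset.univ) (fun p _ => Finset.sum_eq_zero fun τ _ =>
      sandwich_cons_perm_eq_zero hX w (by simp [Perm.decomposeFin_symm_apply_zero])),
    add_zero]
  refine Finset.sum_congr rfl fun τ _ => ?_
  rw [← sandwich_cons_mul_mul]
  congr 1
  ext k
  cases k using Fin.cases <;> simp [Perm.decomposeFin_symm_apply_zero]

end Sandwich

def IsSemiprimeRing (R : Type*) [Ring R] : Prop :=
  ∀ a : R, (∀ r, a * r * a = 0) → a = 0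

section Levitzki
variable {R : Type*} [Ring R]
open Equiv

theorem IsSemiprimeRing.eq_zero_of_sum_sandwich_perm (hR : IsSemiprimeRing R) {t : ℕ}
    (ih : ∀ c : R, (∀ y, c * (y * c) ^ (t + 1) = 0) → c = 0) :
    ∀ (n : ℕ) (c : R), (∀ y, c * (y * c) ^ (t + 2) = 0) →
      (∀ z : Fin (n + 1) → R,
        ∑ σ : Perm (Fin (n + 1)), sandwich c (n + 1) (fun k => z (σ k)) = 0) → c = 0
  | 0, c, _, hsym => hR c fun r => by simpa [sandwich_apply, mul_assoc] using hsym fun _ => r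
  | n + 1, c, hc, hsym => ih c fun y => by
    -- recurse on `n` with `c X c = c (y c)^(t+1)` in place of `c`;
    -- as `2 (t + 1) ≥ t + 2`, `c X c X c = 0`
    set X := y * (c * y) ^ t
    have hXc : X * c = (y * c) ^ (t + 1) := by
      rw [mul_assoc, mul_pow_mul, ← mul_assoc, ← pow_succ']
    have hcXc : c * X * c = c * (y * c) ^ (t + 1) := by rw [mul_assoc, hXc]
    have hX : c * X * c * X * c = 0 := by
      rw [mul_assoc (c * X * c), hXc, hcXc, mul_assoc, ← pow_add,
        show t + 1 + (t + 1) = t + 2 + t by ring, pow_add, ← mul_assoc, hc, zero_mul]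
    rw [← hcXc]
    refine hR.eq_zero_of_sum_sandwich_perm ih n _ (fun z => ?_) (fun w => ?_)
    · have : c * X * c * (z * (c * X * c)) ^ (t + 2) =
          c * X * (c * (z * c * X * c) ^ (t + 2)) := by
        simp only [mul_assoc]
      rw [this, hc, mul_zero]
    · rw [← sum_sandwich_cons_perm hX w]
      exact hsym _

/-- Levitzki: in a semiprime ring, a right ideal `c R` that is nil of bounded index is zero. -/
theorem IsSemiprimeRing.eq_zero_of_forall_mul_pow_eq_zero (hR : IsSemiprimeRing R) :
    ∀ (s : ℕ) (c : R), (∀ y, c * (y * c) ^ (s + 1) = 0) → c = 0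
  | 0, c, hc => hR c fun r => by simpa [mul_assoc] using hc r
  | t + 1, c, hc =>
    hR.eq_zero_of_sum_sandwich_perm (hR.eq_zero_of_forall_mul_pow_eq_zero t) (t + 1) c hc
      fun z => (sandwich c _).sum_perm_eq_zero_of_forall_const_eq_zero
        (fun y => by rw [sandwich_const]; exact hc y) z

theorem mul_mul_pow_eq_zero_of_commutator_pow_eq_zero {b y : R} {m : ℕ}
    (hm : (y * b - b * y) ^ m = 0) (hb : b * b = 0) : b * (y * b) ^ m = 0 := by
  have key (k : ℕ) : b * (y * b - b * y) ^ k = b * (y * b) ^ k := by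
    induction k with
    | zero => simp
    | succ k ih =>
      have hbyb : b * (y * b) ^ k * (b * y) = 0 := by
        rw [← mul_pow_mul, mul_assoc, ← mul_assoc b b, hb, zero_mul, mul_zero]
      rw [pow_succ, ← mul_assoc, ih, mul_sub, hbyb, sub_zero, pow_succ, mul_assoc]
  rw [← key, hm, mul_zero]

theorem IsSemiprimeRing.isReduced (hR : IsSemiprimeRing R) {m : ℕ}
    (hcomm : ∀ x y : R, (x * y - y * x) ^ m = 0) : IsReduced R :=
  (isReduced_iff_pow_one_lt 2 one_lt_two).2 fun b hb =>
    hR.eq_zero_of_forall_mul_pow_eq_zero m b fun y => by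
      rw [pow_succ, ← mul_assoc, mul_mul_pow_eq_zero_of_commutator_pow_eq_zero (hcomm y b)
        (by rwa [← sq]), zero_mul]

end Levitzki

namespace TwoSidedIdeal
variable {R : Type*} [Ring R]

def IsSemiprime (I : TwoSidedIdeal R) : Prop :=
  ∀ a : R, (∀ r, a * r * a ∈ I) → a ∈ I

theorem IsSemiprime.isSemiprimeRing_quotient {I : TwoSidedIdeal R} (hI : I.IsSemiprime) :
    IsSemiprimeRing I.ringCon.Quotient := by
  intro a ha
  obtain ⟨a, rfl⟩ := I.ringCon.mk'_surjective a
  have hker : ∀ x, I.ringCon.mk' x = 0 ↔ x ∈ I := fun x => by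
    rw [← mem_ker, ker_ringCon_mk']
  refine (hker a).2 (hI a fun r => (hker _).1 ?_)
  simpa using ha (I.ringCon.mk' r)

theorem exists_mem_of_mem_sSup_of_isChain {C : Set (TwoSidedIdeal R)}
    (hC : IsChain (· ≤ ·) C) (hne : C.Nonempty) {x : R} (hx : x ∈ sSup C) :
    ∃ I ∈ C, x ∈ I := by
  let U : TwoSidedIdeal R := .mk' (⋃ I ∈ C, (I : Set R))
    (Set.mem_biUnion hne.some_mem hne.some.zero_mem)
    (by
      simp only [Set.mem_iUnion, SetLike.mem_coe, exists_prop]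
      rintro x y ⟨I, hI, hx⟩ ⟨J, hJ, hy⟩
      rcases hC.total hI hJ with h | h
      · exact ⟨J, hJ, J.add_mem (h hx) hy⟩
      · exact ⟨I, hI, I.add_mem hx (h hy)⟩)
    (by
      simp only [Set.mem_iUnion, SetLike.mem_coe, exists_prop]
      rintro x ⟨I, hI, hx⟩
      exact ⟨I, hI, I.neg_mem hx⟩)
    (by
      simp only [Set.mem_iUnion, SetLike.mem_coe, exists_prop]
      rintro x y ⟨I, hI, hy⟩
      exact ⟨I, hI, I.mul_mem_left x y hy⟩)
    (by
      simp only [Set.mem_iUnion, SetLike.mem_coe, exists_prop]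
      rintro x y ⟨I, hI, hx⟩
      exact ⟨I, hI, I.mul_mem_right x y hx⟩)
  have hU : sSup C ≤ U := sSup_le fun I hI y hy => (mem_mk' ..).2 (Set.mem_biUnion hI hy)
  simpa [U] using hU hx

theorem mul_mul_mem_of_mem_span_singleton {I : TwoSidedIdeal R} {a : R}
    (ha : ∀ r, a * r * a ∈ I) {u v : R} (hu : u ∈ span {a}) (hv : v ∈ span {a}) (r : R) :
    u * r * v ∈ I := by
  induction hu using span_induction generalizing r with
  | mem x hx =>
    rw [Set.mem_singleton_iff.1 hx]
    induction hv using span_induction generalizing r with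
    | mem y hy => rw [Set.mem_singleton_iff.1 hy]; exact ha r
    | zero => simp
    | add y z _ _ hy hz => rw [mul_add]; exact I.add_mem (hy r) (hz r)
    | neg y _ hy => rw [mul_neg]; exact I.neg_mem (hy r)
    | left_absorb s y _ hy => rw [← mul_assoc, mul_assoc a]; exact hy _
    | right_absorb s y _ hy => rw [← mul_assoc]; exact I.mul_mem_right _ _ (hy r)
  | zero => simp
  | add x y _ _ hx hy => rw [add_mul, add_mul]; exact I.add_mem (hx r) (hy r)
  | neg x _ hx => rw [neg_mul, neg_mul]; exact I.neg_mem (hx r)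
  | left_absorb s x _ hx => rw [mul_assoc s, mul_assoc s]; exact I.mul_mem_left _ _ (hx r)
  | right_absorb s x _ hx => rw [mul_assoc x s r]; exact hx _

theorem exists_isSemiprime_notMem {c : R} (hc : ¬IsNilpotent c) :
    ∃ I : TwoSidedIdeal R, I.IsSemiprime ∧ c ∉ I := by
  obtain ⟨I, -, hmax⟩ := zorn_le_nonempty₀ {I : TwoSidedIdeal R | ∀ n, c ^ n ∉ I}
    (fun C hCs hC J hJ => ⟨sSup C, fun n hn => by
      obtain ⟨K, hK, hnK⟩ := exists_mem_of_mem_sSup_of_isChain hC ⟨J, hJ⟩ hn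
      exact hCs hK n hnK, fun K => le_sSup⟩)
    ⊥ fun n hn => hc ⟨n, (mem_bot _).1 hn⟩
  refine ⟨I, fun a ha => ?_, by simpa using hmax.prop 1⟩
  by_contra haI
  have hlt : I < I ⊔ span {a} :=
    lt_of_le_of_ne le_sup_left fun h => haI (h ▸ mem_sup_right (subset_span rfl))
  obtain ⟨n, hn⟩ : ∃ n, c ^ n ∈ I ⊔ span {a} := by
    by_contra! h
    exact hmax.not_prop_of_gt hlt h
  obtain ⟨i, hi, u, hu, hiu⟩ := mem_sup.1 hn
  refine hmax.prop (n + n) ?_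
  rw [pow_add, ← hiu, add_mul, mul_add u]
  refine I.add_mem (I.mul_mem_right _ _ hi) (I.add_mem (I.mul_mem_left _ _ hi) ?_)
  simpa using mul_mul_mem_of_mem_span_singleton ha hu hu 1

end TwoSidedIdeal

theorem isNilpotent_iff_forall_isSemiprime_mem {R : Type*} [Ring R] {m : ℕ}
    (hcomm : ∀ x y : R, (x * y - y * x) ^ m = 0) {c : R} :
    IsNilpotent c ↔ ∀ I : TwoSidedIdeal R, I.IsSemiprime → c ∈ I := by
  refine ⟨fun hc I hI => ?_, fun h => ?_⟩
  · have : IsReduced I.ringCon.Quotient := hI.isSemiprimeRing_quotient.isReduced (m := m)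
      (I.ringCon.mk'_surjective.forall₂.2 fun x y => by
        simp only [← map_mul, ← map_sub, ← map_pow, hcomm, map_zero])
    rw [← TwoSidedIdeal.ker_ringCon_mk' I, TwoSidedIdeal.mem_ker]
    exact (hc.map _).eq_zero
  · by_contra hc
    obtain ⟨I, hI, hcI⟩ := TwoSidedIdeal.exists_isSemiprime_notMem hc
    exact hcI (h I hI)

theorem nilpotents_form_twoSided_ideal_general
    (k A : Type*) [CommRing k] [Ring A] [Algebra k A]
    (m : ℕ) (hid : IsPolyId k A (commPow k m)) :
    (∀ a b : A, IsNilpotent a → IsNilpotent b → IsNilpotent (a + b)) ∧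
    (∀ (c : k) (a : A), IsNilpotent a → IsNilpotent (c • a)) ∧
    (∀ (x a : A), IsNilpotent a → IsNilpotent (x * a)) ∧
    (∀ (x a : A), IsNilpotent a → IsNilpotent (a * x)) := by
  have hcomm (x y : A) : (x * y - y * x) ^ m = 0 := by
    simpa [commPow] using hid fun n => if n = 0 then x else y
  have hmem (a : A) := isNilpotent_iff_forall_isSemiprime_mem hcomm (c := a)
  refine ⟨fun a b ha hb => ?_, fun c a ha => ha.smul c, fun x a ha => ?_, fun x a ha => ?_⟩
  · exact (hmem _).2 fun I hI => I.add_mem ((hmem a).1 ha I hI) ((hmem b).1 hb I hI)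
  · exact (hmem _).2 fun I hI => I.mul_mem_left x a ((hmem a).1 ha I hI)
  · exact (hmem _).2 fun I hI => I.mul_mem_right a x ((hmem a).1 ha I hI)

theorem nilpotents_form_twoSided_ideal
    (k A : Type*) [CommRing k] [Ring A] [Algebra k A]
    (m : ℕ) (hm : 1 ≤ m) (hid : IsPolyId k A (commPow k m)) :
    (∀ a b : A, IsNilpotent a → IsNilpotent b → IsNilpotent (a + b)) ∧
    (∀ (c : k) (a : A), IsNilpotent a → IsNilpotent (c • a)) ∧
    (∀ (x a : A), IsNilpotent a → IsNilpotent (x * a)) ∧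
    (∀ (x a : A), IsNilpotent a → IsNilpotent (a * x)) :=
  nilpotents_form_twoSided_ideal_general k A m hid
end
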